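/- There exist absolute constants k₀ > 0 and K ≥ 1 such that, in the setting of the Whitney decomposition 𝒲 of Q⁰ associated to the set E with ε ≤ k₀/N: every Q ∈ 𝒲 satisfies K^{−1}(Δ + dist(Q, E₁)) ≤ δ_Q ≤ K(Δ + dist(Q, E₁)). Moreover δ_Q ≤ K·Δ and dist(Q,E₁) ≤ δ_Q for Q ∈ 𝒲_I, and K^{−1}·dist(Q,E₁) ≤ δ_Q ≤ K·dist(Q,E₁) for Q ∈ 𝒲_II ∪ 𝒲_III. -/

import Mathlib

open MeasureTheory Set Metric
open scoped Classical

noncomputable section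

abbrev Pt : Type := EuclideanSpace ℝ (Fin 2)

/-- The point `(a, b)` of the Euclidean plane. -/
def pt (a b : ℝ) : Pt := WithLp.toLp 2 ![a, b]

/-- `V` is an `N`-ary tree: a finite prefix-closed set of strings over the alphabet
`{0, …, N−1}` containing the empty string (the root), in which every non-leaf node
has at least `2` (and, automatically, at most `N`) children. -/
def IsNaryTree (N : ℕ) (V : Finset (List ℕ)) : Prop :=
  [] ∈ V ∧
  (∀ v ∈ V, ∀ u : List ℕ, u <+: v → u ∈ V) ∧
  (∀ v ∈ V, ∀ i ∈ v, i < N) ∧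
  (∀ v ∈ V, (∃ a : ℕ, v ++ [a] ∈ V) →
    2 ≤ ((Finset.range N).filter (fun a => v ++ [a] ∈ V)).card)

/-- `v` is a leaf of `V`. -/
def IsLeaf (V : Finset (List ℕ)) (v : List ℕ) : Prop :=
  v ∈ V ∧ ∀ a : ℕ, v ++ [a] ∉ V

/-- The tree has depth at least one, i.e. the root is not a leaf. -/
def DepthAtLeastOne (V : Finset (List ℕ)) : Prop := ∃ a : ℕ, [a] ∈ V

/-- Radially decaying weights with parameter `ε` (with the convention `W ∅ = 1`). -/
def RadiallyDecaying (V : Finset (List ℕ)) (W : List ℕ → ℝ) (ε : ℝ) : Prop :=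
  W [] = 1 ∧ (∀ v ∈ V, 0 < W v) ∧ ∀ v ∈ V, v ≠ [] → W v ≤ ε * W v.dropLast

/-- The map `Ψ(v) = ∑_{i=1}^{d(v)} W(π_{i−1}(v))·v_i/(N−1)`. -/
def Psi (N : ℕ) (W : List ℕ → ℝ) (v : List ℕ) : ℝ :=
  ∑ i ∈ Finset.range v.length, W (v.take i) * (v.getD i 0 : ℝ) / ((N : ℝ) - 1)

/-- `Δ = min_{v ∈ ∂V} W_v`. -/
def Delta (V : Finset (List ℕ)) (W : List ℕ → ℝ) : ℝ :=
  sInf {w : ℝ | ∃ v, IsLeaf V v ∧ w = W v}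

def E1set (Δ : ℝ) : Set Pt :=
  {x | (∃ n : ℤ, x 0 = (n : ℝ) * Δ) ∧ x 0 ∈ Ico (0 : ℝ) 2 ∧ x 1 = 0}

def E2set (N : ℕ) (V : Finset (List ℕ)) (W : List ℕ → ℝ) : Set Pt :=
  {x | ∃ v, IsLeaf V v ∧ x = pt (Psi N W v) (W v)}

def Eset (N : ℕ) (V : Finset (List ℕ)) (W : List ℕ → ℝ) : Set Pt :=
  E1set (Delta V W) ∪ E2set N V W

/-- Bundle of standing hypotheses: `N ≥ 2`, `V` an `N`-ary tree, `0 < ε ≤ k₀/N`,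
and radially decaying weights with parameter `ε`. -/
def TreeHyp (k₀ : ℝ) (N : ℕ) (V : Finset (List ℕ)) (W : List ℕ → ℝ) (ε : ℝ) : Prop :=
  2 ≤ N ∧ IsNaryTree N V ∧ 0 < ε ∧ ε ≤ k₀ / N ∧ RadiallyDecaying V W ε

/-- Distance between two subsets of the plane. -/
def setDist (s t : Set Pt) : ℝ := sInf {d : ℝ | ∃ x ∈ s, ∃ y ∈ t, d = dist x y}

/-- A dyadic square arising from `Q⁰ = [−3,5)²` by `k` repeated bisections. -/
structure DSquare where
  k : ℕ
  i : ℕ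
  j : ℕ
  hi : i < 2 ^ k
  hj : j < 2 ^ k

namespace DSquare

def side (Q : DSquare) : ℝ := 8 / 2 ^ Q.k

def x0 (Q : DSquare) : ℝ := -3 + Q.i * Q.side

def y0 (Q : DSquare) : ℝ := -3 + Q.j * Q.side

/-- The (half-open) square itself, as a subset of the plane. -/
def set (Q : DSquare) : Set Pt :=
  {x | x 0 ∈ Ico Q.x0 (Q.x0 + Q.side) ∧ x 1 ∈ Ico Q.y0 (Q.y0 + Q.side)}

/-- The concentric dilate `λQ`. -/
def dil (Q : DSquare) (lam : ℝ) : Set Pt :=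
  {x | |x 0 - (Q.x0 + Q.side / 2)| ≤ lam * Q.side / 2 ∧
       |x 1 - (Q.y0 + Q.side / 2)| ≤ lam * Q.side / 2}

/-- The dyadic ancestor of `Q` at generation `k' ≤ Q.k`. -/
def anc (Q : DSquare) (k' : ℕ) (h : k' ≤ Q.k) : DSquare :=
  ⟨k', Q.i / 2 ^ (Q.k - k'), Q.j / 2 ^ (Q.k - k'), by
      have h2 : 0 < 2 ^ (Q.k - k') := pow_pos (by norm_num) _
      rw [Nat.div_lt_iff_lt_mul h2, ← pow_add, Nat.add_sub_cancel' h]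
      exact Q.hi, by
      have h2 : 0 < 2 ^ (Q.k - k') := pow_pos (by norm_num) _
      rw [Nat.div_lt_iff_lt_mul h2, ← pow_add, Nat.add_sub_cancel' h]
      exact Q.hj⟩

end DSquare

def Q0set : Set Pt := {x | x 0 ∈ Ico (-3 : ℝ) 5 ∧ x 1 ∈ Ico (-3 : ℝ) 5}

/-- `Q` belongs to the Whitney decomposition `𝒲` of `Q⁰` relative to `E`:
`3Q ∩ E` has at most one point, while `3Q'' ∩ E` has at least two points for every
proper dyadic ancestor `Q''` of `Q`. -/
def InWhitney (E : Set Pt) (Q : DSquare) : Prop :=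
  (Q.dil 3 ∩ E).Subsingleton ∧
  ∀ k' : ℕ, ∀ h : k' < Q.k, ¬ ((Q.anc k' h.le).dil 3 ∩ E).Subsingleton

/-- `Q ↔ Q'`, i.e. `1.1Q ∩ 1.1Q' ≠ ∅`. -/
def Touch (Q Q' : DSquare) : Prop := (Q.dil 1.1 ∩ Q'.dil 1.1).Nonempty

/-- `‖F‖_{L^{2,p}(Ω)}^p = ∫_Ω |∇²F|^p`. -/
def sobEnergy (p : ℝ) (Ω : Set Pt) (F : Pt → ℝ) : ℝ :=
  ∫ x in Ω, ‖iteratedFDeriv ℝ 2 F x‖ ^ p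

/-- The seminorm `‖F‖_{L^{2,p}(Ω)}`. -/
def sobNorm (p : ℝ) (Ω : Set Pt) (F : Pt → ℝ) : ℝ := sobEnergy p Ω F ^ (1 / p)

/-- Membership in the homogeneous Sobolev space `L^{2,p}(ℝ²)` (we work with `C²`
representatives with finite seminorm). -/
def MemSob (p : ℝ) (F : Pt → ℝ) : Prop :=
  ContDiff ℝ 2 F ∧ Integrable fun x => ‖iteratedFDeriv ℝ 2 F x‖ ^ p

/-- The trace seminorm `‖f‖_{L^{2,p}(E)}` of `f : E → ℝ`. -/
def traceSobNorm (p : ℝ) (E : Set Pt) (f : E → ℝ) : ℝ :=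
  sInf {c : ℝ | ∃ F : Pt → ℝ, MemSob p F ∧ (∀ y : E, F y.1 = f y) ∧ c = sobNorm p univ F}

/-- `T` is a linear extension operator `L^{2,p}(E) → L^{2,p}(ℝ²)` with norm bound `M`. -/
def IsExtOpPlane (p : ℝ) (E : Set Pt) (M : ℝ) (T : (E → ℝ) →ₗ[ℝ] (Pt → ℝ)) : Prop :=
  ∀ f : E → ℝ, (∃ F : Pt → ℝ, MemSob p F ∧ ∀ y : E, F y.1 = f y) →
    MemSob p (T f) ∧ (∀ y : E, T f y.1 = f y) ∧
      sobNorm p univ (T f) ≤ M * traceSobNorm p E f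

/-- `‖Φ‖_{L^{1,p}(V)}^p = ∑_{v ∈ V₀} |Φ(v) − Φ(π(v))|^p W_v^{2−p}`. -/
def treeEnergy (p : ℝ) (V : Finset (List ℕ)) (W : List ℕ → ℝ) (Φ : List ℕ → ℝ) : ℝ :=
  ∑ v ∈ V.erase [], |Φ v - Φ v.dropLast| ^ p * W v ^ (2 - p)

def treeNorm (p : ℝ) (V : Finset (List ℕ)) (W : List ℕ → ℝ) (Φ : List ℕ → ℝ) : ℝ :=
  treeEnergy p V W Φ ^ (1 / p)

/-- The type of leaves of `V`. -/
def Leaves (V : Finset (List ℕ)) : Type := {v : List ℕ // IsLeaf V v}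

/-- The trace seminorm `‖φ‖_{L^{1,p}(∂V)}`. -/
def treeTraceNorm (p : ℝ) (V : Finset (List ℕ)) (W : List ℕ → ℝ) (φ : Leaves V → ℝ) : ℝ :=
  sInf {c : ℝ | ∃ Φ : List ℕ → ℝ, (∀ v : Leaves V, Φ v.1 = φ v) ∧ c = treeNorm p V W Φ}

/-- `H` is a linear extension operator `L^{1,p}(∂V) → L^{1,p}(V)` with norm bound `M`. -/
def IsExtOpTree (p : ℝ) (V : Finset (List ℕ)) (W : List ℕ → ℝ) (M : ℝ)
    (H : (Leaves V → ℝ) →ₗ[ℝ] (List ℕ → ℝ)) : Prop :=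
  ∀ φ : Leaves V → ℝ,
    (∀ v : Leaves V, H φ v.1 = φ v) ∧ treeNorm p V W (H φ) ≤ M * treeTraceNorm p V W φ

/-- Longest common prefix of two strings (the lowest common ancestor). -/
def lcp : List ℕ → List ℕ → List ℕ
  | a :: as, b :: bs => if a = b then a :: lcp as bs else []
  | _, _ => []

/-- The cluster `C_v ⊆ E₂` associated to a vertex `v ∈ V`. -/
def Cluster (N : ℕ) (V : Finset (List ℕ)) (W : List ℕ → ℝ) (v : List ℕ) : Set Pt :=
  {x | ∃ u, IsLeaf V u ∧ v <+: u ∧ x = pt (Psi N W u) (W u)}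

/-- The average `(∂₂G)_S` of the vertical derivative of `G` over `S`. -/
def d2avg (S : Set Pt) (G : Pt → ℝ) : ℝ :=
  ⨍ x in S, fderiv ℝ G x (EuclideanSpace.single 1 1)

end

/-!
The set `E` is `Δ`-separated, and every point of `E` lies within `Δ + r` of the lattice `E₁`,
where `r` is its distance to any other point of `E`. For `E₂` both facts come from
`ε ≲ 1/N`: two leaves branching below `w` have `Ψ`-values at least `W_w/(N-1)` apart up to
tails of size `O(ε W_w)`, which dominates their heights.

If `δ_Q` exceeded `Δ + dist(Q, E₁)`, then `3Q` would contain a point of `E₁` together with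
its lattice neighbour. Conversely the triple of the parent of `Q`, which lies in `7Q`, contains
two points of `E`; their distance bounds `Δ`, and the second fact bounds `dist(Q, E₁)`.
-/

@[simp] lemma pt_zero (a b : ℝ) : pt a b 0 = a := rfl

@[simp] lemma pt_one (a b : ℝ) : pt a b 1 = b := rfl

lemma Pt.ext_coord {x y : Pt} (h0 : x 0 = y 0) (h1 : x 1 = y 1) : x = y := by
  ext i
  fin_cases i
  exacts [h0, h1]

lemma Pt.abs_sub_le_dist (x y : Pt) (i : Fin 2) : |x i - y i| ≤ dist x y :=
  PiLp.dist_apply_le x y i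

lemma Pt.dist_le_abs_add_abs (x y : Pt) : dist x y ≤ |x 0 - y 0| + |x 1 - y 1| := by
  rw [EuclideanSpace.dist_eq, Fin.sum_univ_two, Real.dist_eq, Real.dist_eq, sq_abs, sq_abs,
    Real.sqrt_le_iff]
  constructor
  · positivity
  · nlinarith [abs_nonneg (x 0 - y 0), abs_nonneg (x 1 - y 1), sq_abs (x 0 - y 0),
      sq_abs (x 1 - y 1)]

lemma setDist_le {s t : Set Pt} {x y : Pt} (hx : x ∈ s) (hy : y ∈ t) :
    setDist s t ≤ dist x y :=
  csInf_le ⟨0, by rintro r ⟨x, _, y, _, rfl⟩; exact dist_nonneg⟩ ⟨x, hx, y, hy, rfl⟩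

lemma le_setDist {s t : Set Pt} {c : ℝ} (hs : s.Nonempty) (ht : t.Nonempty)
    (h : ∀ x ∈ s, ∀ y ∈ t, c ≤ dist x y) : c ≤ setDist s t := by
  obtain ⟨x, hx⟩ := hs
  obtain ⟨y, hy⟩ := ht
  refine le_csInf ⟨_, x, hx, y, hy, rfl⟩ ?_
  rintro r ⟨x, hx, y, hy, rfl⟩
  exact h x hx y hy

section E1set

variable {Δ : ℝ}

lemma pt_mem_E1set (n : ℤ) (h0 : 0 ≤ n * Δ) (h2 : n * Δ < 2) : pt (n * Δ) 0 ∈ E1set Δ :=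
  ⟨⟨n, rfl⟩, ⟨h0, h2⟩, rfl⟩

lemma E1set_nonempty : (E1set Δ).Nonempty :=
  ⟨pt ((0 : ℤ) * Δ) 0, pt_mem_E1set 0 (by simp) (by simp)⟩

lemma E1set_exists_neighbor (hΔ : 0 < Δ) (hΔ1 : Δ ≤ 1) {x : Pt} (hx : x ∈ E1set Δ) :
    ∃ y ∈ E1set Δ, y ≠ x ∧ dist x y ≤ Δ := by
  obtain ⟨⟨n, hn⟩, ⟨h0, h2⟩, hx1⟩ := hx
  have key : ∀ m : ℤ, 0 ≤ m * Δ → m * Δ < 2 → |n - m| = 1 →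
      ∃ y ∈ E1set Δ, y ≠ x ∧ dist x y ≤ Δ := fun m hm0 hm2 hnm => by
    have habs : |x 0 - m * Δ| = Δ := by
      rw [hn, ← sub_mul, abs_mul, abs_of_pos hΔ, ← Int.cast_sub, ← Int.cast_abs, hnm,
        Int.cast_one, one_mul]
    refine ⟨pt (m * Δ) 0, pt_mem_E1set m hm0 hm2, fun h => ?_, ?_⟩
    · rw [← h, pt_zero, sub_self, abs_zero] at habs
      exact hΔ.ne habs
    · calc dist x (pt (m * Δ) 0) ≤ |x 0 - m * Δ| + |x 1 - 0| := Pt.dist_le_abs_add_abs _ _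
        _ = Δ := by rw [habs, hx1, sub_zero, abs_zero, add_zero]
  -- `Δ ≤ 1` keeps one of `(n ± 1) Δ` inside `[0, 2)`.
  by_cases hup : (n + 1 : ℤ) * Δ < 2
  · exact key (n + 1) (by push_cast; nlinarith) hup (by simp)
  · exact key (n - 1) (by push_cast at hup ⊢; nlinarith) (by push_cast; nlinarith) (by simp)

lemma exists_mem_E1set_dist_le (hΔ : 0 < Δ) {s : ℝ} (hs0 : 0 ≤ s) (hs2 : s < 2) :
    ∃ p ∈ E1set Δ, dist (pt s 0) p ≤ Δ := by
  set n := ⌊s / Δ⌋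
  have hlow : n * Δ ≤ s := (le_div_iff₀ hΔ).mp (Int.floor_le _)
  have hup : s < (n + 1) * Δ := (div_lt_iff₀ hΔ).mp (Int.lt_floor_add_one _)
  have hn0 : (0 : ℝ) ≤ n := by exact_mod_cast Int.floor_nonneg.mpr (by positivity)
  refine ⟨pt (n * Δ) 0, pt_mem_E1set n (by positivity) (by linarith), ?_⟩
  calc dist (pt s 0) (pt (n * Δ) 0) ≤ |s - n * Δ| + |(0 : ℝ) - 0| :=
        Pt.dist_le_abs_add_abs _ _
    _ ≤ Δ := by rw [sub_self, abs_zero, add_zero, abs_le]; constructor <;> linarith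

lemma Delta_le_dist_of_mem_E1set (hΔ : 0 < Δ) {x y : Pt} (hx : x ∈ E1set Δ)
    (hy : y ∈ E1set Δ) (hxy : x ≠ y) : Δ ≤ dist x y := by
  obtain ⟨⟨n, hn⟩, -, hx1⟩ := hx
  obtain ⟨⟨m, hm⟩, -, hy1⟩ := hy
  have hnm : n - m ≠ 0 := fun h => hxy <| Pt.ext_coord
    (by rw [hn, hm, sub_eq_zero.mp h]) (by rw [hx1, hy1])
  have h1 : (1 : ℝ) ≤ |((n - m : ℤ) : ℝ)| := by exact_mod_cast Int.one_le_abs hnm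
  calc Δ ≤ |((n - m : ℤ) : ℝ)| * Δ := le_mul_of_one_le_left hΔ.le h1
    _ = |x 0 - y 0| := by rw [hn, hm, ← sub_mul, abs_mul, abs_of_pos hΔ]; push_cast; rfl
    _ ≤ dist x y := Pt.abs_sub_le_dist x y 0

end E1set

lemma List.exists_eq_append_cons_of_not_prefix {α : Type*} :
    ∀ {u u' : List α}, ¬ u <+: u' → ¬ u' <+: u →
      ∃ w a b s t, a ≠ b ∧ u = w ++ a :: s ∧ u' = w ++ b :: t
  | [], _, h, _ => absurd (List.nil_prefix) h
  | _, [], _, h' => absurd (List.nil_prefix) h'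
  | a :: as, b :: bs, h, h' => by
    by_cases hab : a = b
    · subst hab
      obtain ⟨w, c, d, s, t, hcd, rfl, rfl⟩ := List.exists_eq_append_cons_of_not_prefix
        (fun hp => h (List.cons_prefix_cons.mpr ⟨rfl, hp⟩))
        (fun hp => h' (List.cons_prefix_cons.mpr ⟨rfl, hp⟩))
      exact ⟨a :: w, c, d, s, t, hcd, rfl, rfl⟩
    · exact ⟨[], a, b, as, bs, hab, rfl, rfl⟩

section Tree

variable {N : ℕ} {V : Finset (List ℕ)} {W : List ℕ → ℝ} {ε : ℝ}

lemma IsNaryTree.mem_of_prefix (tr : IsNaryTree N V) {u v : List ℕ} (hv : v ∈ V)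
    (h : u <+: v) : u ∈ V :=
  tr.2.1 v hv u h

lemma IsNaryTree.exists_isLeaf (tr : IsNaryTree N V) : ∃ v, IsLeaf V v := by
  obtain ⟨v, hv, hmax⟩ := V.exists_max_image List.length ⟨[], tr.1⟩
  exact ⟨v, hv, fun a ha => by simpa using hmax _ ha⟩

lemma IsLeaf.not_prefix (tr : IsNaryTree N V) {u v : List ℕ} (hu : IsLeaf V u) (hv : v ∈ V)
    (h : u ≠ v) : ¬ u <+: v := by
  rintro ⟨_ | ⟨a, t⟩, rfl⟩
  · exact h (List.append_nil u).symm
  · exact hu.2 a (tr.mem_of_prefix hv ⟨t, by simp⟩)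

lemma RadiallyDecaying.le_mul_of_append (rd : RadiallyDecaying V W ε) {v : List ℕ} {a : ℕ}
    (h : v ++ [a] ∈ V) : W (v ++ [a]) ≤ ε * W v := by
  simpa using rd.2.2 _ h (by simp)

lemma RadiallyDecaying.anti_of_prefix (tr : IsNaryTree N V) (rd : RadiallyDecaying V W ε)
    (hε1 : ε ≤ 1) {u v : List ℕ} (hv : v ∈ V) (h : u <+: v) : W v ≤ W u := by
  induction v using List.reverseRecOn with
  | nil => rw [List.prefix_nil.mp h]
  | append_singleton v a ih =>
    rcases List.prefix_concat_iff.mp h with rfl | h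
    · rfl
    · have hv' := tr.mem_of_prefix hv (List.prefix_append v [a])
      have := rd.le_mul_of_append hv
      nlinarith [rd.2.1 v hv', ih hv' h]

lemma Psi_nil (N : ℕ) (W : List ℕ → ℝ) : Psi N W [] = 0 := by
  simp [Psi]

lemma Psi_append_singleton (N : ℕ) (W : List ℕ → ℝ) (v : List ℕ) (a : ℕ) :
    Psi N W (v ++ [a]) = Psi N W v + W v * a / (N - 1) := by
  rw [Psi, List.length_append, List.length_singleton, Finset.sum_range_succ, Psi]
  congr 1
  · refine Finset.sum_congr rfl fun i hi => ?_
    have hi := Finset.mem_range.mp hi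
    rw [List.take_append_of_le_length hi.le, List.getD_append _ _ _ _ hi]
  · simp

/-- The bound `2 (W u - W v)` rather than `2 W u` is what makes the induction close. -/
lemma Psi_sub_le (tr : IsNaryTree N V) (rd : RadiallyDecaying V W ε) (hε : ε ≤ 1 / 2)
    {u v : List ℕ} (hv : v ∈ V) (h : u <+: v) :
    0 ≤ Psi N W v - Psi N W u ∧ Psi N W v - Psi N W u ≤ 2 * (W u - W v) := by
  induction v using List.reverseRecOn with
  | nil => rw [List.prefix_nil.mp h]; simp
  | append_singleton v a ih =>
    rcases List.prefix_concat_iff.mp h with rfl | h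
    · simp
    have hv' := tr.mem_of_prefix hv (List.prefix_append v [a])
    obtain ⟨ih₀, ih₁⟩ := ih hv' h
    have hWv := rd.2.1 v hv'
    have hdecay := rd.le_mul_of_append hv
    have ha : (a : ℝ) ≤ N - 1 := by
      have := tr.2.2.1 _ hv a (by simp)
      rw [le_sub_iff_add_le]; exact_mod_cast this
    have ha₀ : (0 : ℝ) ≤ a := a.cast_nonneg
    have hterm₀ : 0 ≤ W v * a / (N - 1) := div_nonneg (by positivity) (by linarith)
    have hterm₁ : W v * a / (N - 1) ≤ W v := by
      rw [mul_div_assoc]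
      exact mul_le_of_le_one_right hWv.le (div_le_one_of_le₀ ha (by linarith))
    have : ε * W v ≤ W v / 2 := by nlinarith
    rw [Psi_append_singleton]
    constructor <;> linarith

lemma Psi_nonneg_lt_two (tr : IsNaryTree N V) (rd : RadiallyDecaying V W ε) (hε : ε ≤ 1 / 2)
    {v : List ℕ} (hv : v ∈ V) : 0 ≤ Psi N W v ∧ Psi N W v < 2 := by
  have h := Psi_sub_le tr rd hε hv List.nil_prefix
  rw [Psi_nil, sub_zero, rd.1] at h
  have := rd.2.1 v hv
  constructor <;> linarith

lemma W_le_abs_Psi_sub (hN : 2 ≤ N) (tr : IsNaryTree N V) (rd : RadiallyDecaying V W ε)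
    (hε : ε ≤ 1 / 2) (hεN : 3 * ε * (N - 1) ≤ 1) {u u' : List ℕ} (hu : IsLeaf V u)
    (hu' : IsLeaf V u') (h : u ≠ u') : W u ≤ |Psi N W u - Psi N W u'| := by
  obtain ⟨w, a, b, s, t, hab, rfl, rfl⟩ := List.exists_eq_append_cons_of_not_prefix
    (hu.not_prefix tr hu'.1 h) (hu'.not_prefix tr hu.1 (Ne.symm h))
  have hwa : w ++ [a] <+: w ++ a :: s := ⟨s, by simp⟩
  have hwb : w ++ [b] <+: w ++ b :: t := ⟨t, by simp⟩
  have hwaV := tr.mem_of_prefix hu.1 hwa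
  obtain ⟨tail_a₀, tail_a⟩ := Psi_sub_le tr rd hε hu.1 hwa
  obtain ⟨tail_b₀, tail_b⟩ := Psi_sub_le tr rd hε hu'.1 hwb
  have hWu := rd.anti_of_prefix tr (by linarith) hu.1 hwa
  have hWa := rd.le_mul_of_append hwaV
  have hWb := rd.le_mul_of_append (tr.mem_of_prefix hu'.1 hwb)
  have hWw := rd.2.1 w (tr.mem_of_prefix hwaV (List.prefix_append w [a]))
  have hWu₀ := rd.2.1 _ hu.1
  have hWu'₀ := rd.2.1 _ hu'.1
  rw [Psi_append_singleton] at tail_a₀ tail_a tail_b₀ tail_b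
  have hN1 : (0 : ℝ) < N - 1 := by
    rw [sub_pos]; exact_mod_cast hN
  set c := W w / (N - 1)
  have hc : 3 * ε * W w ≤ c := by
    rw [le_div_iff₀ hN1]; nlinarith
  have hab' : (1 : ℝ) ≤ |(a : ℝ) - b| := by
    have : (1 : ℤ) ≤ |(a : ℤ) - b| := Int.one_le_abs (sub_ne_zero.mpr (by exact_mod_cast hab))
    exact_mod_cast this
  have hlead : c ≤ |c * (a - b)| := by
    rw [abs_mul, abs_of_pos (by positivity : 0 < c)]
    exact le_mul_of_one_le_right (by positivity) hab'
  have hsplit : W w * a / (N - 1) - W w * b / (N - 1) = c * (a - b) := by ring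
  rcases le_abs'.mp hlead with hneg | hpos
  · exact le_abs.mpr (Or.inr (by linarith))
  · exact le_abs.mpr (Or.inl (by linarith))

lemma finite_leaf_weights (V : Finset (List ℕ)) (W : List ℕ → ℝ) :
    {w : ℝ | ∃ v, IsLeaf V v ∧ w = W v}.Finite :=
  (V.finite_toSet.image W).subset <| by
    rintro _ ⟨v, hv, rfl⟩
    exact ⟨v, hv.1, rfl⟩

lemma Delta_mem (tr : IsNaryTree N V) : ∃ v, IsLeaf V v ∧ W v = Delta V W := by
  obtain ⟨v, hv⟩ := tr.exists_isLeaf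
  obtain ⟨v, hv, hw⟩ := Set.Nonempty.csInf_mem (s := {w : ℝ | ∃ v, IsLeaf V v ∧ w = W v})
    ⟨_, v, hv, rfl⟩ (finite_leaf_weights V W)
  exact ⟨v, hv, hw.symm⟩

lemma Delta_le {v : List ℕ} (hv : IsLeaf V v) : Delta V W ≤ W v :=
  csInf_le (finite_leaf_weights V W).bddBelow ⟨v, hv, rfl⟩

lemma Delta_pos (tr : IsNaryTree N V) (rd : RadiallyDecaying V W ε) : 0 < Delta V W := by
  obtain ⟨v, hv, hw⟩ := Delta_mem (W := W) tr
  exact hw ▸ rd.2.1 v hv.1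

lemma Delta_le_one (tr : IsNaryTree N V) (rd : RadiallyDecaying V W ε) (hε : ε ≤ 1) :
    Delta V W ≤ 1 := by
  obtain ⟨v, hv, hw⟩ := Delta_mem (W := W) tr
  exact hw ▸ rd.1 ▸ rd.anti_of_prefix tr hε hv.1 List.nil_prefix

end Tree

section Eset

variable {N : ℕ} {V : Finset (List ℕ)} {W : List ℕ → ℝ} {ε : ℝ}

lemma W_le_dist_of_mem_Eset (hN : 2 ≤ N) (tr : IsNaryTree N V) (rd : RadiallyDecaying V W ε)
    (hε : ε ≤ 1 / 2) (hεN : 3 * ε * (N - 1) ≤ 1) {u : List ℕ} (hu : IsLeaf V u) {y : Pt}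
    (hy : y ∈ Eset N V W) (hne : pt (Psi N W u) (W u) ≠ y) :
    W u ≤ dist (pt (Psi N W u) (W u)) y := by
  rcases hy with hy | ⟨u', hu', rfl⟩
  · calc W u = |pt (Psi N W u) (W u) 1 - y 1| := by
          rw [hy.2.2, pt_one, sub_zero, abs_of_pos (rd.2.1 u hu.1)]
      _ ≤ _ := Pt.abs_sub_le_dist _ _ 1
  · have huu' : u ≠ u' := by rintro rfl; exact hne rfl
    exact (W_le_abs_Psi_sub hN tr rd hε hεN hu hu' huu').trans
      (Pt.abs_sub_le_dist (pt _ _) (pt _ _) 0)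

lemma Delta_le_dist_of_mem_Eset (hN : 2 ≤ N) (tr : IsNaryTree N V)
    (rd : RadiallyDecaying V W ε) (hε : ε ≤ 1 / 2) (hεN : 3 * ε * (N - 1) ≤ 1) {x y : Pt}
    (hx : x ∈ Eset N V W) (hy : y ∈ Eset N V W) (hxy : x ≠ y) : Delta V W ≤ dist x y := by
  rcases hx with hx | ⟨u, hu, rfl⟩
  · rcases hy with hy | ⟨u, hu, rfl⟩
    · exact Delta_le_dist_of_mem_E1set (Delta_pos tr rd) hx hy hxy
    · rw [dist_comm]
      exact (Delta_le hu).trans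
        (W_le_dist_of_mem_Eset hN tr rd hε hεN hu (Or.inl hx) (Ne.symm hxy))
  · exact (Delta_le hu).trans (W_le_dist_of_mem_Eset hN tr rd hε hεN hu hy hxy)

lemma exists_mem_E1set_dist_le_of_mem_Eset (hN : 2 ≤ N) (tr : IsNaryTree N V)
    (rd : RadiallyDecaying V W ε) (hε : ε ≤ 1 / 2) (hεN : 3 * ε * (N - 1) ≤ 1) {x y : Pt}
    (hx : x ∈ Eset N V W) (hy : y ∈ Eset N V W) (hxy : x ≠ y) :
    ∃ p ∈ E1set (Delta V W), dist x p ≤ Delta V W + dist x y := by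
  rcases hx with hx | ⟨u, hu, rfl⟩
  · exact ⟨x, hx, by rw [dist_self]; linarith [Delta_pos tr rd, dist_nonneg (x := x) (y := y)]⟩
  · obtain ⟨hΨ₀, hΨ₂⟩ := Psi_nonneg_lt_two tr rd hε hu.1
    obtain ⟨p, hp, hdist⟩ := exists_mem_E1set_dist_le (Delta_pos tr rd) hΨ₀ hΨ₂
    refine ⟨p, hp, ?_⟩
    have hproj : dist (pt (Psi N W u) (W u)) (pt (Psi N W u) 0) ≤ W u := by
      refine (Pt.dist_le_abs_add_abs _ _).trans ?_
      simp [abs_of_pos (rd.2.1 u hu.1)]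
    have := W_le_dist_of_mem_Eset hN tr rd hε hεN hu hy hxy
    linarith [dist_triangle (pt (Psi N W u) (W u)) (pt (Psi N W u) 0) p]

end Eset

lemma exists_mem_Ico_abs_sub_le {l u a r η : ℝ} (hlu : l < u) (hr : 0 ≤ r) (hη : 0 < η)
    (ha : a ∈ Icc (l - r) (u + r)) : ∃ b ∈ Ico l u, |b - a| ≤ r + η := by
  refine ⟨max l (min a (u - η)), ⟨le_max_left _ _, max_lt hlu (by simp [hη])⟩, ?_⟩
  rw [abs_le]
  constructor
  · rcases le_total a (u - η) with h | h <;> simp only [h, min_eq_left, min_eq_right] <;>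
      linarith [le_max_right l a, le_max_right l (u - η), ha.2]
  · rcases le_total l (min a (u - η)) with h | h <;> simp only [h, max_eq_left, max_eq_right] <;>
      linarith [min_le_left a (u - η), ha.1]

namespace DSquare

variable (Q : DSquare) {x y : Pt} {lam mu : ℝ}

lemma side_pos : 0 < Q.side := by
  unfold side; positivity

lemma set_subset_dil_one : Q.set ⊆ Q.dil 1 := by
  rintro x ⟨⟨h0, h0'⟩, h1, h1'⟩
  constructor <;> rw [abs_le] <;> constructor <;> linarith

lemma set_nonempty : Q.set.Nonempty :=
  ⟨pt Q.x0 Q.y0, by simp [DSquare.set, Q.side_pos]⟩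

variable {Q}

lemma mem_dil_of_dist_le (hx : x ∈ Q.dil lam) (h : 2 * dist x y ≤ (mu - lam) * Q.side) :
    y ∈ Q.dil mu := by
  have h0 := Pt.abs_sub_le_dist y x 0
  have h1 := Pt.abs_sub_le_dist y x 1
  have t0 := abs_sub_le (y 0) (x 0) (Q.x0 + Q.side / 2)
  have t1 := abs_sub_le (y 1) (x 1) (Q.y0 + Q.side / 2)
  rw [dist_comm] at h0 h1
  exact ⟨by linarith [hx.1], by linarith [hx.2]⟩

lemma dist_le_of_mem_dil (hx : x ∈ Q.dil lam) (hy : y ∈ Q.dil mu) :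
    dist x y ≤ (lam + mu) * Q.side := by
  have t0 := abs_sub_le (x 0) (Q.x0 + Q.side / 2) (y 0)
  have t1 := abs_sub_le (x 1) (Q.y0 + Q.side / 2) (y 1)
  rw [abs_sub_comm (Q.x0 + _)] at t0
  rw [abs_sub_comm (Q.y0 + _)] at t1
  linarith [Pt.dist_le_abs_add_abs x y, hx.1, hx.2, hy.1, hy.2]

lemma exists_mem_set_dist_le (hx : x ∈ Q.dil 1.1) : ∃ q ∈ Q.set, dist q x ≤ Q.side / 5 := by
  have hδ := Q.side_pos
  obtain ⟨h0, h1⟩ := hx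
  rw [abs_le] at h0 h1
  obtain ⟨b0, hb0, hb0x⟩ := exists_mem_Ico_abs_sub_le (l := Q.x0) (u := Q.x0 + Q.side)
    (a := x 0) (r := Q.side / 20) (η := Q.side / 20) (by linarith) (by positivity)
    (by positivity) ⟨by linarith, by linarith⟩
  obtain ⟨b1, hb1, hb1x⟩ := exists_mem_Ico_abs_sub_le (l := Q.y0) (u := Q.y0 + Q.side)
    (a := x 1) (r := Q.side / 20) (η := Q.side / 20) (by linarith) (by positivity)
    (by positivity) ⟨by linarith, by linarith⟩
  refine ⟨pt b0 b1, ⟨hb0, hb1⟩, (Pt.dist_le_abs_add_abs _ _).trans ?_⟩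
  simp only [pt_zero, pt_one]
  linarith

variable {E F : Set Pt} {Δ : ℝ} {p : Pt}

lemma anc_dil_three_subset (hk : 0 < Q.k) :
    (Q.anc (Q.k - 1) (Nat.sub_le _ _)).dil 3 ⊆ Q.dil 7 := by
  set P := Q.anc (Q.k - 1) (Nat.sub_le _ _)
  have hside : P.side = 2 * Q.side := by
    have : (2 : ℝ) ^ Q.k = 2 * 2 ^ (Q.k - 1) := by rw [← pow_succ']; congr 1; omega
    simp only [P, side, anc, this]
    field_simp
  have hhalf : ∀ n : ℕ, n / 2 ^ (Q.k - (Q.k - 1)) = n / 2 := fun n => by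
    rw [show Q.k - (Q.k - 1) = 1 by omega, pow_one]
  have hcenter : ∀ n : ℕ, |(-3 + ((n / 2 : ℕ) : ℝ) * P.side + P.side / 2) -
      (-3 + n * Q.side + Q.side / 2)| ≤ Q.side / 2 := fun n => by
    have h₁ : ((2 * (n / 2) : ℕ) : ℝ) ≤ n := by exact_mod_cast Nat.mul_div_le n 2
    have h₂ : (n : ℝ) ≤ ((2 * (n / 2) + 1 : ℕ) : ℝ) := by exact_mod_cast (by omega)
    push_cast at h₁ h₂
    rw [hside, abs_le]
    have := Q.side_pos
    constructor <;> nlinarith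
  have hx : |P.x0 + P.side / 2 - (Q.x0 + Q.side / 2)| ≤ Q.side / 2 := by
    have := hcenter Q.i
    rw [← hhalf] at this
    exact this
  have hy : |P.y0 + P.side / 2 - (Q.y0 + Q.side / 2)| ≤ Q.side / 2 := by
    have := hcenter Q.j
    rw [← hhalf] at this
    exact this
  rintro z ⟨hz0, hz1⟩
  have t0 := abs_sub_le (z 0) (P.x0 + P.side / 2) (Q.x0 + Q.side / 2)
  have t1 := abs_sub_le (z 1) (P.y0 + P.side / 2) (Q.y0 + Q.side / 2)
  exact ⟨by linarith, by linarith⟩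

lemma three_sub_mul_side_lt_of_mem_dil (hΔ : 0 < Δ) (hΔ1 : Δ ≤ 1) (hE : E1set Δ ⊆ E)
    (hQ : (Q.dil 3 ∩ E).Subsingleton) {mu : ℝ} (hp : p ∈ E1set Δ) (hpQ : p ∈ Q.dil mu) :
    (3 - mu) * Q.side < 2 * Δ := by
  by_contra! h
  obtain ⟨p', hp', hne, hdist⟩ := E1set_exists_neighbor hΔ hΔ1 hp
  have hp3 : p ∈ Q.dil 3 := mem_dil_of_dist_le hpQ (by rw [dist_self]; linarith)
  have hp'3 : p' ∈ Q.dil 3 := mem_dil_of_dist_le hpQ (by linarith)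
  exact hne (hQ ⟨hp'3, hE hp'⟩ ⟨hp3, hE hp⟩)

lemma k_pos_of_subsingleton (hΔ : 0 < Δ) (hΔ1 : Δ ≤ 1) (hE : E1set Δ ⊆ E)
    (hQ : (Q.dil 3 ∩ E).Subsingleton) : 0 < Q.k := by
  by_contra! hk
  have hk : Q.k = 0 := by omega
  have hi : Q.i = 0 := by have := Q.hi; rw [hk] at this; omega
  have hj : Q.j = 0 := by have := Q.hj; rw [hk] at this; omega
  have hside : Q.side = 8 := by simp [side, hk]
  have horigin : pt ((0 : ℤ) * Δ) 0 ∈ Q.dil 1 := by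
    norm_num [dil, x0, y0, hi, hj, hside, abs_le]
  have := three_sub_mul_side_lt_of_mem_dil hΔ hΔ1 hE hQ (pt_mem_E1set 0 (by simp) (by simp))
    horigin
  linarith

lemma side_le_add_setDist (hΔ : 0 < Δ) (hΔ1 : Δ ≤ 1) (hE : E1set Δ ⊆ E)
    (hQ : (Q.dil 3 ∩ E).Subsingleton) : Q.side ≤ Δ + setDist Q.set (E1set Δ) := by
  have hδ := Q.side_pos
  suffices h : Q.side - Δ ≤ setDist Q.set (E1set Δ) by linarith
  refine le_setDist Q.set_nonempty E1set_nonempty fun q hq p hp => ?_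
  have hpQ : p ∈ Q.dil (1 + 2 * dist q p / Q.side) :=
    mem_dil_of_dist_le (Q.set_subset_dil_one hq) (by field_simp; linarith)
  have := three_sub_mul_side_lt_of_mem_dil hΔ hΔ1 hE hQ hp hpQ
  field_simp at this
  linarith

lemma side_lt_two_mul_Delta_of_mem_dil (hΔ : 0 < Δ) (hΔ1 : Δ ≤ 1) (hE : E1set Δ ⊆ E)
    (hQ : (Q.dil 3 ∩ E).Subsingleton) (hp : p ∈ E1set Δ) (hpQ : p ∈ Q.dil 1.1) :
    Q.side < 2 * Δ := by
  have := three_sub_mul_side_lt_of_mem_dil hΔ hΔ1 hE hQ hp hpQ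
  linarith [Q.side_pos]

lemma setDist_le_side_of_mem_dil (hp : p ∈ F) (hpQ : p ∈ Q.dil 1.1) :
    setDist Q.set F ≤ Q.side := by
  obtain ⟨q, hq, hqp⟩ := exists_mem_set_dist_le hpQ
  linarith [setDist_le hq hp, Q.side_pos]

lemma side_div_twenty_le_setDist (hF : F.Nonempty) (hQF : Q.dil 1.1 ∩ F = ∅) :
    Q.side / 20 ≤ setDist Q.set F := by
  refine le_setDist Q.set_nonempty hF fun q hq p hp => ?_
  by_contra! h
  have hpQ : p ∈ Q.dil 1.1 := mem_dil_of_dist_le (Q.set_subset_dil_one hq) (by linarith)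
  exact (Set.eq_empty_iff_forall_notMem.mp hQF) p ⟨hpQ, hp⟩

lemma add_setDist_le_of_inWhitney (hQ : InWhitney E Q) (hk : 0 < Q.k)
    (hsep : ∀ x ∈ E, ∀ y ∈ E, x ≠ y → Δ ≤ dist x y)
    (hnear : ∀ x ∈ E, ∀ y ∈ E, x ≠ y → ∃ p ∈ F, dist x p ≤ Δ + dist x y) :
    Δ + setDist Q.set F ≤ 50 * Q.side := by
  obtain ⟨x, ⟨hxP, hxE⟩, y, ⟨hyP, hyE⟩, hxy⟩ :=
    Set.not_subsingleton_iff.mp (hQ.2 (Q.k - 1) (by omega))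
  have hx7 := anc_dil_three_subset hk hxP
  have hy7 := anc_dil_three_subset hk hyP
  obtain ⟨q, hq⟩ := Q.set_nonempty
  obtain ⟨p, hp, hxp⟩ := hnear x hxE y hyE hxy
  have hxy14 : dist x y ≤ 14 * Q.side := by linarith [dist_le_of_mem_dil hx7 hy7]
  have hqx : dist q x ≤ 8 * Q.side := by
    linarith [dist_le_of_mem_dil (Q.set_subset_dil_one hq) hx7]
  linarith [hsep x hxE y hyE hxy, setDist_le hq hp, dist_triangle q x p]

end DSquare

/-- Lemma 5 of the paper: `δ_Q ≈ Δ + dist(Q, E₁)` for Whitney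
squares, with refinements for squares of Type I and of Types II/III. -/
theorem statement8 :
    ∃ k₀ K : ℝ, 0 < k₀ ∧ 1 ≤ K ∧
      ∀ (N : ℕ) (V : Finset (List ℕ)) (W : List ℕ → ℝ) (ε : ℝ),
        TreeHyp k₀ N V W ε → DepthAtLeastOne V →
          ∀ Q : DSquare, InWhitney (Eset N V W) Q →
            (K⁻¹ * (Delta V W + setDist Q.set (E1set (Delta V W))) ≤ Q.side ∧
              Q.side ≤ K * (Delta V W + setDist Q.set (E1set (Delta V W)))) ∧
            ((∃ x : Pt, Q.dil 1.1 ∩ E1set (Delta V W) = {x}) →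
              Q.side ≤ K * Delta V W ∧ setDist Q.set (E1set (Delta V W)) ≤ Q.side) ∧
            (Q.dil 1.1 ∩ E1set (Delta V W) = ∅ →
              K⁻¹ * setDist Q.set (E1set (Delta V W)) ≤ Q.side ∧
                Q.side ≤ K * setDist Q.set (E1set (Delta V W))) := by
  refine ⟨1 / 4, 50, by norm_num, by norm_num,
    fun N V W ε ⟨hN, tr, _, hεN, rd⟩ _ Q hQ => ?_⟩
  have hN' : (2 : ℝ) ≤ N := by exact_mod_cast hN
  have hεN' : 4 * N * ε ≤ 1 := by
    rw [div_div, le_div_iff₀ (by positivity)] at hεN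
    linarith
  have hε2 : ε ≤ 1 / 2 := by nlinarith
  have hε3 : 3 * ε * (N - 1) ≤ 1 := by nlinarith
  have hΔ := Delta_pos tr rd
  have hΔ1 := Delta_le_one tr rd (by linarith)
  have hE : E1set (Delta V W) ⊆ Eset N V W := Set.subset_union_left
  have hupper := DSquare.side_le_add_setDist hΔ hΔ1 hE hQ.1
  have hk := DSquare.k_pos_of_subsingleton hΔ hΔ1 hE hQ.1
  have hlower := DSquare.add_setDist_le_of_inWhitney hQ hk
    (fun x hx y hy => Delta_le_dist_of_mem_Eset hN tr rd hε2 hε3 hx hy)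
    (fun x hx y hy => exists_mem_E1set_dist_le_of_mem_Eset hN tr rd hε2 hε3 hx hy)
  refine ⟨⟨by linarith, by linarith⟩, fun ⟨p, hp⟩ => ?_, fun hempty => ?_⟩
  · obtain ⟨hpQ, hpE⟩ : p ∈ Q.dil 1.1 ∩ E1set (Delta V W) := hp ▸ rfl
    exact ⟨by linarith [DSquare.side_lt_two_mul_Delta_of_mem_dil hΔ hΔ1 hE hQ.1 hpE hpQ],
      DSquare.setDist_le_side_of_mem_dil hpE hpQ⟩
  · have := DSquare.side_div_twenty_le_setDist E1set_nonempty hempty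
    constructor <;> linarith
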